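/- arXiv:2103.05452 — 2 statements merged into one kernel-verified Lean document; each statement's English description precedes it below -/
import Mathlib

section
/- Let G ≤ Aut(T) be a self-similar strongly fractal group and let B = Bas_s(G) for some s ≥ 1. Let ω be a group word that is a law in G (i.e. the verbal subgroup ω(G) is trivial) but is not a law in B. Then B is weakly regular branch over the verbal subgroup ω(B). -/
/-!
Groups of automorphisms of the `m`-regular rooted tree, encoded via portraits:
an automorphism is determined by the family of its labels (local actions)
`label : List (Fin m) → Equiv.Perm (Fin m)`.
-/

namespace Basilica

/-- An automorphism of the `m`-regular rooted tree, given by its portrait. -/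
structure TreeAut (m : ℕ) where
  label : List (Fin m) → Equiv.Perm (Fin m)

namespace TreeAut

variable {m : ℕ}

lemma ext_label {a b : TreeAut m} (h : ∀ u, a.label u = b.label u) : a = b := by
  cases a
  cases b
  simp only [mk.injEq]
  exact funext h

/-- The section of an automorphism at a vertex. -/
def sec (a : TreeAut m) (v : List (Fin m)) : TreeAut m := ⟨fun u => a.label (v ++ u)⟩

@[simp] lemma sec_label (a : TreeAut m) (v u : List (Fin m)) :
    (a.sec v).label u = a.label (v ++ u) := rfl

@[simp] lemma sec_nil (a : TreeAut m) : a.sec [] = a := rfl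

lemma sec_sec (a : TreeAut m) (v w : List (Fin m)) : (a.sec v).sec w = a.sec (v ++ w) :=
  ext_label fun u => by simp [List.append_assoc]

/-- The action of a tree automorphism on the vertices (finite words). -/
def apply : TreeAut m → List (Fin m) → List (Fin m)
  | _, [] => []
  | a, x :: u => a.label [] x :: (a.sec [x]).apply u

/-- The inverse action of a tree automorphism on the vertices. -/
def invApply : TreeAut m → List (Fin m) → List (Fin m)
  | _, [] => []
  | a, x :: u => (a.label [])⁻¹ x :: (a.sec [(a.label [])⁻¹ x]).invApply u

instance : One (TreeAut m) := ⟨⟨fun _ => 1⟩⟩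
instance : Mul (TreeAut m) := ⟨fun a b => ⟨fun u => a.label (b.apply u) * b.label u⟩⟩
instance : Inv (TreeAut m) := ⟨fun a => ⟨fun u => (a.label (a.invApply u))⁻¹⟩⟩

@[simp] lemma one_label (u : List (Fin m)) : (1 : TreeAut m).label u = 1 := rfl

@[simp] lemma mul_label (a b : TreeAut m) (u : List (Fin m)) :
    (a * b).label u = a.label (b.apply u) * b.label u := rfl

@[simp] lemma inv_label (a : TreeAut m) (u : List (Fin m)) :
    a⁻¹.label u = (a.label (a.invApply u))⁻¹ := rfl

@[simp] lemma one_sec (v : List (Fin m)) : (1 : TreeAut m).sec v = 1 := rfl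

@[simp] lemma apply_nil (a : TreeAut m) : a.apply [] = [] := rfl

lemma apply_cons (a : TreeAut m) (x : Fin m) (u : List (Fin m)) :
    a.apply (x :: u) = a.label [] x :: (a.sec [x]).apply u := rfl

@[simp] lemma one_apply (u : List (Fin m)) : (1 : TreeAut m).apply u = u := by
  induction u with
  | nil => rfl
  | cons x u ih => simp [apply_cons, ih]

lemma apply_append (a : TreeAut m) (v u : List (Fin m)) :
    a.apply (v ++ u) = a.apply v ++ (a.sec v).apply u := by
  induction v generalizing a with
  | nil => simp
  | cons x v ih =>
      simp only [List.cons_append, apply_cons, ih, sec_sec, List.singleton_append,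
        List.nil_append]

lemma mul_sec (a b : TreeAut m) (v : List (Fin m)) :
    (a * b).sec v = a.sec (b.apply v) * b.sec v :=
  ext_label fun u => by simp [apply_append]

lemma mul_apply (a b : TreeAut m) (u : List (Fin m)) :
    (a * b).apply u = a.apply (b.apply u) := by
  induction u generalizing a b with
  | nil => rfl
  | cons x u ih =>
      rw [apply_cons, mul_sec, ih]
      simp [apply_cons, Equiv.Perm.mul_apply]

lemma invApply_apply (a : TreeAut m) (u : List (Fin m)) : a.invApply (a.apply u) = u := by
  induction u generalizing a with
  | nil => rfl
  | cons x u ih => simp [apply_cons, invApply, ih]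

lemma apply_invApply (a : TreeAut m) (u : List (Fin m)) : a.apply (a.invApply u) = u := by
  induction u generalizing a with
  | nil => rfl
  | cons x u ih => simp [invApply, apply_cons, ih]

instance : Group (TreeAut m) where
  mul_assoc a b c := ext_label fun u => by simp [mul_apply, mul_assoc]
  one_mul a := ext_label fun u => by simp
  mul_one a := ext_label fun u => by simp
  inv_mul_cancel a := ext_label fun u => by simp [invApply_apply]

lemma apply_injective (a : TreeAut m) : Function.Injective a.apply := by
  intro x y h
  have hx := invApply_apply a x
  rw [h, invApply_apply] at hx
  exact hx.symm

@[simp] lemma apply_length (a : TreeAut m) (u : List (Fin m)) :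
    (a.apply u).length = u.length := by
  induction u generalizing a with
  | nil => rfl
  | cons x u ih => simp [apply_cons, ih]

/-- `cons ρ f` is `ρ · ψ₁⁻¹(f 0, …, f (m-1))`: the automorphism with root label `ρ`
and first-layer sections `f x`. -/
def cons (ρ : Equiv.Perm (Fin m)) (f : Fin m → TreeAut m) : TreeAut m :=
  ⟨fun u =>
    match u with
    | [] => ρ
    | x :: v => (f x).label v⟩

end TreeAut

variable {m : ℕ}

/-- The `n`-th layer stabiliser `St_G(n)` of a group `G` of tree automorphisms. -/
def layerStab (G : Subgroup (TreeAut m)) (n : ℕ) : Subgroup (TreeAut m) where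
  carrier := {g | g ∈ G ∧ ∀ u : List (Fin m), u.length = n → g.apply u = u}
  one_mem' := ⟨G.one_mem, fun u _ => TreeAut.one_apply u⟩
  mul_mem' := by
    rintro a b ⟨haG, ha⟩ ⟨hbG, hb⟩
    refine ⟨G.mul_mem haG hbG, fun u hu => ?_⟩
    rw [TreeAut.mul_apply, hb u hu, ha u hu]
  inv_mem' := by
    rintro a ⟨haG, ha⟩
    refine ⟨G.inv_mem haG, fun u hu => ?_⟩
    apply TreeAut.apply_injective a
    rw [← TreeAut.mul_apply, mul_inv_cancel, TreeAut.one_apply, ha u hu]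

/-- A group of tree automorphisms acts spherically transitively if it acts
transitively on every layer. -/
def SphericallyTransitive (G : Subgroup (TreeAut m)) : Prop :=
  ∀ u v : List (Fin m), u.length = v.length → ∃ g ∈ G, g.apply u = v

/-- A group of tree automorphisms is self-similar if it is closed under sections. -/
def SelfSimilar (G : Subgroup (TreeAut m)) : Prop :=
  ∀ g ∈ G, ∀ v : List (Fin m), g.sec v ∈ G

/-- A spherically transitive group is fractal if `st_G(u)|_u = G` for all vertices `u`. -/
def Fractal (G : Subgroup (TreeAut m)) : Prop :=
  SphericallyTransitive G ∧
    ∀ u : List (Fin m),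
      {h : TreeAut m | ∃ g ∈ G, g.apply u = u ∧ g.sec u = h} = (G : Set (TreeAut m))

/-- A spherically transitive group is strongly fractal if `St_G(1)|_x = G` for all `x ∈ X`. -/
def StronglyFractal (G : Subgroup (TreeAut m)) : Prop :=
  SphericallyTransitive G ∧
    ∀ x : Fin m,
      {h : TreeAut m | ∃ g ∈ layerStab G 1, g.sec [x] = h} = (G : Set (TreeAut m))

/-- A spherically transitive group is very strongly fractal if
`St_G(n+1)|_x = St_G(n)` for all `n` and `x ∈ X`. -/
def VeryStronglyFractal (G : Subgroup (TreeAut m)) : Prop :=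
  SphericallyTransitive G ∧
    ∀ (n : ℕ) (x : Fin m),
      {h : TreeAut m | ∃ g ∈ layerStab G (n + 1), g.sec [x] = h}
        = (layerStab G n : Set (TreeAut m))

/-- A group of tree automorphisms is contracting if it has a finite nucleus. -/
def Contracting (G : Subgroup (TreeAut m)) : Prop :=
  ∃ N : Set (TreeAut m), N.Finite ∧ N ⊆ (G : Set (TreeAut m)) ∧
    ∀ g ∈ G, ∃ k : ℕ, ∀ v : List (Fin m), k < v.length → g.sec v ∈ N

/-- A tree automorphism is finite-state if it has finitely many distinct sections. -/
def FiniteState (f : TreeAut m) : Prop :=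
  {h : TreeAut m | ∃ u : List (Fin m), f.sec u = h}.Finite

/-- A tree automorphism is bounded if the number of nontrivial sections at the
`n`-th layer is bounded uniformly in `n`. -/
def BoundedAut (f : TreeAut m) : Prop :=
  ∃ C : ℕ, ∀ n : ℕ, {u : List (Fin m) | u.length = n ∧ f.sec u ≠ 1}.ncard ≤ C

/-- The `n`-th rigid layer stabiliser: the subgroup generated by the rigid vertex
stabilisers of the vertices of the `n`-th layer. -/
def rigidLayerStab (G : Subgroup (TreeAut m)) (n : ℕ) : Subgroup (TreeAut m) :=
  Subgroup.closure {g | g ∈ G ∧ ∃ v : List (Fin m), v.length = n ∧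
    ∀ u : List (Fin m), ¬ v <+: u → g.apply u = u}

/-- A weakly branch group: spherically transitive with nontrivial rigid layer stabilisers. -/
def WeaklyBranch (G : Subgroup (TreeAut m)) : Prop :=
  SphericallyTransitive G ∧ ∀ n : ℕ, rigidLayerStab G n ≠ ⊥

/-- `H` is weakly regular branch over `K ≤ H` if `ψ₁(St_K(1)) ⊇ K × ⋯ × K`. -/
def WeaklyRegularBranchOver (H K : Subgroup (TreeAut m)) : Prop :=
  K ≤ H ∧ ∀ f : Fin m → TreeAut m, (∀ x, f x ∈ K) → TreeAut.cons 1 f ∈ K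

/-- The portrait of the `i`-th Basilica monomorphism `β^s_i` applied to `g`,
computed by recursion over vertices. -/
def betaLabel [NeZero m] (s : ℕ) : List (Fin m) → ℕ → TreeAut m → Equiv.Perm (Fin m)
  | [], i, g => if i = 0 then g.label [] else 1
  | x :: u, i, g =>
      if i = 0 then betaLabel s u (s - 1) (g.sec [x])
      else if x = 0 then betaLabel s u (i - 1) g else 1

/-- The Basilica monomorphism `β^s_i : Aut(T) → Aut(T)`, satisfying
`β_i(g) = ψ₁⁻¹(β_{i-1}(g), 1, …, 1)` for `1 ≤ i ≤ s-1` and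
`β_0(g) = g|^ε · ψ₁⁻¹(β_{s-1}(g|_0), …, β_{s-1}(g|_{m-1}))`. -/
def betaAut [NeZero m] (s i : ℕ) (g : TreeAut m) : TreeAut m := ⟨fun u => betaLabel s u i g⟩

/-- The `s`-th Basilica group of `G`. -/
def basilica [NeZero m] (s : ℕ) (G : Subgroup (TreeAut m)) : Subgroup (TreeAut m) :=
  Subgroup.closure {b | ∃ g ∈ G, ∃ i < s, b = betaAut s i g}

/-- The subgroup `S_i = ⟨β_j(G) : j ≠ i⟩` of the `s`-th Basilica group. -/
def Ssub [NeZero m] (s i : ℕ) (G : Subgroup (TreeAut m)) : Subgroup (TreeAut m) :=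
  Subgroup.closure {b | ∃ g ∈ G, ∃ j < s, j ≠ i ∧ b = betaAut s j g}

/-- The normal closure `N_i` of `S_i` in the `s`-th Basilica group of `G`. -/
def Nsub [NeZero m] (s i : ℕ) (G : Subgroup (TreeAut m)) : Subgroup (TreeAut m) :=
  Subgroup.closure {x | ∃ b ∈ basilica s G, ∃ y ∈ Ssub s i G, x = b * y * b⁻¹}

/-- The `i`-th splitting kernel `K_i = β_i⁻¹(β_i(G) ∩ N_i)` of `G`, as a set. -/
def Kset [NeZero m] (s i : ℕ) (G : Subgroup (TreeAut m)) : Set (TreeAut m) :=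
  {g | g ∈ G ∧ betaAut s i g ∈ Nsub s i G}

/-- The portrait of the monomorphism `π_i` (for the `d`-fold diagonal construction). -/
def piLabel (d : ℕ) : List (Fin m) → ℕ → TreeAut m → Equiv.Perm (Fin m)
  | [], i, g => if i = 0 then g.label [] else 1
  | x :: u, i, g =>
      if i = 0 then piLabel d u (d - 1) (g.sec [x])
      else piLabel d u (i - 1) g

/-- The monomorphism `π_i : Aut(T) → Aut(T)`, satisfying
`π_0(g) = g|^ε · ψ₁⁻¹(π_{d-1}(g|_0), …, π_{d-1}(g|_{m-1}))` and
`π_i(g) = ψ₁⁻¹(π_{i-1}(g), …, π_{i-1}(g))` for `1 ≤ i ≤ d-1`. -/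
def piAut (d i : ℕ) (g : TreeAut m) : TreeAut m := ⟨fun u => piLabel d u i g⟩

/-- The generator of the `m`-adic odometer: `a = σ · ψ₁⁻¹(a, 1, …, 1)` with
`σ = (0 1 … m-1)`. -/
def odometer (m : ℕ) [NeZero m] : TreeAut m :=
  ⟨fun u => if ∀ x ∈ u, x = 0 then finRotate m else 1⟩

/-- The group `O_m^d = D_d(O_m) = ⟨π_i(a) : 0 ≤ i ≤ d-1⟩`. -/
def OdPow (m d : ℕ) [NeZero m] : Subgroup (TreeAut m) :=
  Subgroup.closure {x | ∃ i < d, x = piAut d i (odometer m)}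

/-- The group `Γ` of all automorphisms all of whose labels are powers of the
cycle `σ = (0 1 … m-1)`. -/
def Gamma (m : ℕ) : Subgroup (TreeAut m) where
  carrier := {g | ∀ u : List (Fin m), g.label u ∈ Subgroup.zpowers (finRotate m)}
  one_mem' := by
    intro u
    rw [TreeAut.one_label]
    exact one_mem _
  mul_mem' := by
    intro a b ha hb u
    rw [TreeAut.mul_label]
    exact mul_mem (ha _) (hb _)
  inv_mem' := by
    intro a ha u
    rw [TreeAut.inv_label]
    exact inv_mem (ha _)

/-- The Hausdorff dimension of `G ≤ Γ` relative to `Γ`. -/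
noncomputable def hdim (m : ℕ) (G : Subgroup (TreeAut m)) : ℝ :=
  Filter.liminf (fun n : ℕ =>
    Real.logb m ((layerStab G n).relIndex G) /
      Real.logb m ((layerStab (Gamma m) n).relIndex (Gamma m))) Filter.atTop

/-- The series of obstructions `o_G(n) = m·log_m|L_G(n-1)| - log_m|L_G(n)|` (for `n ≥ 1`),
where `L_G(n) = St_G(n)/St_G(n+1)`. -/
noncomputable def obstruction (m : ℕ) (G : Subgroup (TreeAut m)) (n : ℕ) : ℝ :=
  m * Real.logb m ((layerStab G n).relIndex (layerStab G (n - 1)))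
    - Real.logb m ((layerStab G (n + 1)).relIndex (layerStab G n))

/-- The permutation group induced by `G` on the first layer acts regularly on `X`. -/
def RegularRootAction (G : Subgroup (TreeAut m)) : Prop :=
  (∀ x y : Fin m, ∃ g ∈ G, g.label [] x = y) ∧
    ∀ g ∈ G, ∀ x : Fin m, g.label [] x = x → g.label [] = 1
/-!
Fix a first-layer vertex `x`. Every `b ∈ B = Bas_s(G)` is the section at `x` of some
`c ∈ St_B(1)` whose other first-layer sections lie in `β_{s-1}(G)`. Such `b` form a subgroup,
so it suffices to check the generators: `β_{s-1}(g)` is the `x`-section of `β_0(g')` for any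
`g' ∈ St_G(1)` with `g'|_x = g` (strong fractality), and `β_i(g)` for `i < s - 1` is reached by
conjugating `β_{i+1}(g) = ψ₁⁻¹(β_i(g), 1, …, 1)` with some `β_0(a)`, `a(0) = x`.

Now take values `b_t ∈ B` of `ω` and such lifts `c_t`. Then `ω(c_t) ∈ ω(B)` lies in `St(1)`,
its section at `x` is `ω(b_t)`, and its other sections are values of `ω` on
`β_{s-1}(G) ≅ G`, hence trivial. So `ψ₁⁻¹(1, …, ω(b), …, 1) ∈ ω(B)`, and these generate
`ψ₁⁻¹(ω(B) × ⋯ × ω(B))`.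
-/

section Verbal

variable {Γ Γ' ι X : Type*} [Group Γ] [Group Γ']

def verbalSubgroup (w : FreeGroup ι) (H : Subgroup Γ) : Subgroup Γ :=
  Subgroup.closure {x | ∃ f : ι → Γ, (∀ t, f t ∈ H) ∧ x = FreeGroup.lift f w}

def IsLaw (w : FreeGroup ι) (H : Subgroup Γ) : Prop :=
  ∀ f : ι → Γ, (∀ t, f t ∈ H) → FreeGroup.lift f w = 1

lemma freeGroupLift_mem {H : Subgroup Γ} {f : ι → Γ} (hf : ∀ t, f t ∈ H)
    (w : FreeGroup ι) : FreeGroup.lift f w ∈ H :=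
  FreeGroup.range_lift_le (Set.range_subset_iff.2 hf) ⟨w, rfl⟩

lemma map_freeGroupLift (φ : Γ →* Γ') (f : ι → Γ) (w : FreeGroup ι) :
    φ (FreeGroup.lift f w) = FreeGroup.lift (φ ∘ f) w :=
  FreeGroup.lift_unique (φ.comp (FreeGroup.lift f)) (by simp)

lemma verbalSubgroup_le (w : FreeGroup ι) (H : Subgroup Γ) : verbalSubgroup w H ≤ H :=
  (Subgroup.closure_le H).2 fun _ ⟨_, hf, hx⟩ => hx ▸ freeGroupLift_mem hf w

lemma IsLaw.map {w : FreeGroup ι} {H : Subgroup Γ} (hw : IsLaw w H) (φ : Γ →* Γ') :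
    IsLaw w (H.map φ) := by
  intro f hf
  choose g hgH hgf using hf
  rw [show f = φ ∘ g from funext fun t => (hgf t).symm, ← map_freeGroupLift φ, hw g hgH,
    map_one]

variable [DecidableEq X]

def coordLifts (φ : (X → Γ) →* Γ) (B L : Subgroup Γ) (x : X) : Subgroup Γ :=
  (B.comap φ ⊓ Subgroup.pi {x}ᶜ fun _ => L).map (Pi.evalMonoidHom (fun _ => Γ) x)

theorem map_mulSingle_mem_verbalSubgroup {φ : (X → Γ) →* Γ} {B L : Subgroup Γ}
    {w : FreeGroup ι} (hL : IsLaw w L) {x : X} (hB : B ≤ coordLifts φ B L x) {h : Γ}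
    (hh : h ∈ verbalSubgroup w B) : φ (Pi.mulSingle x h) ∈ verbalSubgroup w B := by
  suffices verbalSubgroup w B ≤ (verbalSubgroup w B).comap (φ.comp (MonoidHom.mulSingle _ x))
    from this hh
  refine (Subgroup.closure_le _).2 ?_
  rintro _ ⟨F, hF, rfl⟩
  choose e he hex using fun t => hB (hF t)
  have hmulSingle : Pi.mulSingle x (FreeGroup.lift F w) = FreeGroup.lift e w := by
    funext y
    rw [← Pi.evalMonoidHom_apply (fun _ => Γ) y (FreeGroup.lift e w),
      map_freeGroupLift]
    by_cases hyx : y = x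
    · subst hyx
      rw [Pi.mulSingle_eq_same]
      exact congrArg (FreeGroup.lift · w) (funext fun t => (hex t).symm)
    · rw [Pi.mulSingle_eq_of_ne hyx]
      exact (hL _ fun t => (he t).2 y hyx).symm
  show φ (Pi.mulSingle x _) ∈ verbalSubgroup w B
  rw [hmulSingle, map_freeGroupLift φ]
  exact Subgroup.subset_closure ⟨φ ∘ e, fun t => (he t).1, rfl⟩

end Verbal

namespace TreeAut

lemma label_cons (a : TreeAut m) (x : Fin m) (u : List (Fin m)) :
    a.label (x :: u) = (a.sec [x]).label u := rfl

lemma ext_sec {a b : TreeAut m} (h₀ : a.label [] = b.label [])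
    (h₁ : ∀ x, a.sec [x] = b.sec [x]) : a = b :=
  ext_label fun
    | [] => h₀
    | x :: u => by rw [label_cons, label_cons, h₁]

lemma sec_mul_singleton (a b : TreeAut m) (x : Fin m) :
    (a * b).sec [x] = a.sec [b.label [] x] * b.sec [x] :=
  mul_sec a b [x]

/-- `ψ₁⁻¹ : Aut(T)^m → St(1)`. -/
def consHom : (Fin m → TreeAut m) →* TreeAut m :=
  MonoidHom.mk' (cons 1) fun f g =>
    ext_sec (by simp [cons]) fun x => by rw [sec_mul_singleton]; rfl

@[simp] lemma consHom_label_nil (f : Fin m → TreeAut m) : (consHom f).label [] = 1 := rfl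

@[simp] lemma consHom_sec (f : Fin m → TreeAut m) (x : Fin m) : (consHom f).sec [x] = f x := rfl

lemma conj_consHom_mulSingle (a h : TreeAut m) (z : Fin m) :
    a * consHom (Pi.mulSingle z h) * a⁻¹ =
      consHom (Pi.mulSingle (a.label [] z) (a.sec [z] * h * (a.sec [z])⁻¹)) := by
  rw [mul_inv_eq_iff_eq_mul]
  refine ext_sec (by simp) fun y => ?_
  rw [sec_mul_singleton, sec_mul_singleton, consHom_label_nil, consHom_sec, consHom_sec]
  by_cases hyz : y = z
  · subst hyz
    simp
  · rw [Pi.mulSingle_eq_of_ne hyz, Pi.mulSingle_eq_of_ne ((a.label []).injective.ne hyz)]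
    simp

end TreeAut

open TreeAut

lemma label_nil_of_mem_layerStab_one {G : Subgroup (TreeAut m)} {g : TreeAut m}
    (hg : g ∈ layerStab G 1) : g.label [] = 1 :=
  Equiv.ext fun y => (List.cons.inj (hg.2 [y] rfl)).1

section Beta

variable [NeZero m] (s : ℕ)

lemma betaAut_zero_label_nil (g : TreeAut m) : (betaAut s 0 g).label [] = g.label [] := rfl

lemma betaAut_zero_sec (g : TreeAut m) (x : Fin m) :
    (betaAut s 0 g).sec [x] = betaAut s (s - 1) (g.sec [x]) := rfl

lemma betaAut_succ (i : ℕ) (g : TreeAut m) :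
    betaAut s (i + 1) g = consHom (Pi.mulSingle 0 (betaAut s i g)) :=
  ext_sec rfl fun x => ext_label fun u => by
    change betaLabel s (x :: u) (i + 1) g = _
    rw [betaLabel, if_neg i.succ_ne_zero, consHom_sec, Pi.mulSingle_apply]
    split_ifs <;> rfl

lemma betaAut_zero_of_label_nil {g : TreeAut m} (hg : g.label [] = 1) :
    betaAut s 0 g = consHom fun x => betaAut s (s - 1) (g.sec [x]) :=
  ext_sec hg fun _ => rfl

lemma betaAut_mul (i : ℕ) (g h : TreeAut m) :
    betaAut s i (g * h) = betaAut s i g * betaAut s i h := by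
  suffices ∀ u i (g h : TreeAut m),
      (betaAut s i (g * h)).label u = (betaAut s i g * betaAut s i h).label u from
    ext_label (this · i g h)
  intro u
  induction u with
  | nil =>
    rintro (_ | i) g h
    · rfl
    · simp [betaAut_succ]
  | cons x u ih =>
    rintro (_ | i) g h
    · rw [label_cons, label_cons, sec_mul_singleton, betaAut_zero_label_nil, betaAut_zero_sec,
        betaAut_zero_sec, betaAut_zero_sec, sec_mul_singleton]
      exact ih _ _ _
    · rw [betaAut_succ, betaAut_succ, betaAut_succ, ← map_mul, ← Pi.mulSingle_mul, label_cons,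
        label_cons, consHom_sec, consHom_sec]
      by_cases hx : x = 0
      · subst hx
        simp only [Pi.mulSingle_eq_same]
        exact ih _ _ _
      · simp only [Pi.mulSingle_eq_of_ne hx]

def betaHom (i : ℕ) : TreeAut m →* TreeAut m :=
  MonoidHom.mk' (betaAut s i) (betaAut_mul s i)

end Beta

section Lifts

variable [NeZero m] {G : Subgroup (TreeAut m)} {s : ℕ}

lemma betaAut_mem_basilica {g : TreeAut m} (hg : g ∈ G) {i : ℕ} (hi : i < s) :
    betaAut s i g ∈ basilica s G :=
  Subgroup.subset_closure ⟨g, hg, i, hi, rfl⟩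

lemma betaAut_pred_mem_coordLifts (hss : SelfSimilar G) (hsf : StronglyFractal G) (hs : 0 < s)
    (x : Fin m) {g : TreeAut m} (hg : g ∈ G) :
    betaAut s (s - 1) g ∈ coordLifts consHom (basilica s G) (G.map (betaHom s (s - 1))) x := by
  obtain ⟨g', hg', rfl⟩ := (Set.ext_iff.1 (hsf.2 x) g).2 hg
  refine ⟨fun y => betaAut s (s - 1) (g'.sec [y]), ⟨?_, ?_⟩, rfl⟩
  · show consHom _ ∈ basilica s G
    rw [← betaAut_zero_of_label_nil s (label_nil_of_mem_layerStab_one hg')]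
    exact betaAut_mem_basilica hg'.1 hs
  · exact fun y _ => ⟨g'.sec [y], hss g' hg'.1 [y], rfl⟩

lemma betaAut_mem_coordLifts (hss : SelfSimilar G) (hsf : StronglyFractal G) (x : Fin m)
    {g : TreeAut m} (hg : g ∈ G) {i : ℕ} (hi : i + 1 < s) :
    betaAut s i g ∈ coordLifts consHom (basilica s G) (G.map (betaHom s (s - 1))) x := by
  obtain ⟨a, haG, ha⟩ := hsf.1 [0] [x] rfl
  set c := betaAut s 0 a
  have hax : c.label [] 0 = x := (List.cons.inj ha).1
  set q := c.sec [0]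
  have hq : q ∈ coordLifts consHom (basilica s G) (G.map (betaHom s (s - 1))) x :=
    betaAut_pred_mem_coordLifts hss hsf (by omega) x (hss a haG [0])
  have hconj : q * betaAut s i g * q⁻¹ ∈
      coordLifts consHom (basilica s G) (G.map (betaHom s (s - 1))) x := by
    refine ⟨Pi.mulSingle x (q * betaAut s i g * q⁻¹), ⟨?_, fun y hy => ?_⟩,
      Pi.mulSingle_eq_same _ _⟩
    · show consHom _ ∈ basilica s G
      rw [← hax, ← conj_consHom_mulSingle, ← betaAut_succ]
      have haB := betaAut_mem_basilica (s := s) haG (by omega : 0 < s)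
      exact mul_mem (mul_mem haB (betaAut_mem_basilica hg hi)) (inv_mem haB)
    · rw [Pi.mulSingle_eq_of_ne hy]
      exact Subgroup.one_mem _
  have := mul_mem (mul_mem (inv_mem hq) hconj) hq
  rwa [show q⁻¹ * (q * betaAut s i g * q⁻¹) * q = betaAut s i g by group] at this

theorem basilica_le_coordLifts (hss : SelfSimilar G) (hsf : StronglyFractal G) (x : Fin m) :
    basilica s G ≤ coordLifts consHom (basilica s G) (G.map (betaHom s (s - 1))) x := by
  refine (Subgroup.closure_le _).2 ?_
  rintro _ ⟨g, hg, i, hi, rfl⟩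
  rcases Nat.lt_or_ge (i + 1) s with hi' | hi'
  · exact betaAut_mem_coordLifts hss hsf x hg hi'
  · obtain rfl : i = s - 1 := by omega
    exact betaAut_pred_mem_coordLifts hss hsf (by omega) x hg

end Lifts

lemma weaklyRegularBranchOver_of_consHom_mulSingle_mem {H K : Subgroup (TreeAut m)}
    (hKH : K ≤ H) (hK : ∀ x, ∀ h ∈ K, consHom (Pi.mulSingle x h) ∈ K) :
    WeaklyRegularBranchOver H K :=
  ⟨hKH, fun f hf => Subgroup.pi_mem_of_mulSingle_mem (H := K.comap consHom) f
    fun x => hK x _ (hf x)⟩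

theorem basilica_weaklyRegularBranch_verbal_general {m : ℕ} [NeZero m]
    (G : Subgroup (TreeAut m)) (hss : SelfSimilar G) (hsf : StronglyFractal G)
    (s : ℕ) (k : ℕ) (w : FreeGroup (Fin k))
    (hlawG : ∀ f : Fin k → TreeAut m, (∀ t, f t ∈ G) → FreeGroup.lift f w = 1) :
    WeaklyRegularBranchOver (basilica s G)
      (Subgroup.closure {x | ∃ f : Fin k → TreeAut m,
        (∀ t, f t ∈ basilica s G) ∧ x = FreeGroup.lift f w}) :=
  weaklyRegularBranchOver_of_consHom_mulSingle_mem (verbalSubgroup_le w (basilica s G))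
    fun x _ hh => map_mulSingle_mem_verbalSubgroup (IsLaw.map (H := G) hlawG _)
      (basilica_le_coordLifts hss hsf x) hh

/-- Let `G ≤ Aut(T)` be self-similar and strongly fractal, `B = Bas_s(G)`,
and let `ω` be a group word that is a law in `G` but not a law in `B`. Then `B` is weakly
regular branch over the verbal subgroup `ω(B)`. -/
theorem basilica_weaklyRegularBranch_verbal {m : ℕ} [NeZero m] (hm : 2 ≤ m)
    (G : Subgroup (TreeAut m)) (hss : SelfSimilar G) (hsf : StronglyFractal G)
    (s : ℕ) (hs : 1 ≤ s) (k : ℕ) (w : FreeGroup (Fin k))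
    (hlawG : ∀ f : Fin k → TreeAut m, (∀ t, f t ∈ G) → FreeGroup.lift f w = 1)
    (hnotlawB : ¬ ∀ f : Fin k → TreeAut m, (∀ t, f t ∈ basilica s G) →
      FreeGroup.lift f w = 1) :
    WeaklyRegularBranchOver (basilica s G)
      (Subgroup.closure {x | ∃ f : Fin k → TreeAut m,
        (∀ t, f t ∈ basilica s G) ∧ x = FreeGroup.lift f w}) :=
  basilica_weaklyRegularBranch_verbal_general G hss hsf s k w hlawG

end Basilica
end

section
/- Let G ≤ Γ act spherically transitively on T. Then the Hausdorff dimension of G relative to Γ is given by dim_H G = 1 − limsup_{n→∞} Σ_{i=1}^{n} (m^{−i} − m^{−(n+1)})·o_G(i), where (o_G(i))_{i≥1} is the series of obstructions of G. -/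
/-!
Groups of automorphisms of the `m`-regular rooted tree, encoded via portraits:
an automorphism is determined by the family of its labels (local actions)
`label : List (Fin m) → Equiv.Perm (Fin m)`.
-/

namespace Basilica

variable {m : ℕ}

/-!
Write `N n = |G : St_G(n)|` and `ℓ k = log_m |St_G(k) : St_G(k+1)|`, so that
`log_m N n = ∑_{k<n} ℓ k`, while `|Γ : St_Γ(n)| = m ^ c n` with `c n = ∑_{k<n} m^k`.
Spherical transitivity inside `Γ` forces `ℓ 0 = 1`, and then the weighted sum of the
obstructions `o (i+1) = m ℓ i - ℓ (i+1)` telescopes to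
`1 - (1 + (m-1) log_m N (n+1)) / m^(n+1)`. Since `(m-1) c (n+1) = m^(n+1) - 1`, this differs from
`1 - log_m N (n+1) / c (n+1)` by at most `m^-(n+1)`, so its limsup is
`1 - liminf log_m N n / c n = 1 - dim_H G`.
-/

open Filter Finset Topology

namespace TreeAut

lemma apply_eq_apply_of_label_eq {a b : TreeAut m} {n : ℕ}
    (h : ∀ v : List (Fin m), v.length < n → a.label v = b.label v) {u : List (Fin m)}
    (hu : u.length ≤ n) : a.apply u = b.apply u := by
  induction u generalizing a b n with
  | nil => rfl
  | cons x u ih =>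
    obtain ⟨n, rfl⟩ : ∃ k, n = k + 1 :=
      ⟨n - 1, by simp only [List.length_cons] at hu; omega⟩
    rw [apply_cons, apply_cons, h [] (by simp)]
    congr 1
    exact ih (fun v hv => h (x :: v) (by simpa using hv)) (by simpa using hu)

lemma apply_eq_self_of_length_le [NeZero m] {a : TreeAut m} {n : ℕ}
    (h : ∀ u : List (Fin m), u.length = n → a.apply u = u) {u : List (Fin m)}
    (hu : u.length ≤ n) : a.apply u = u := by
  have hpad := h (u ++ List.replicate (n - u.length) 0) (by simp; omega)
  rw [apply_append] at hpad
  exact (List.append_inj hpad (by simp)).1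

lemma label_eq_one_of_length_lt [NeZero m] {a : TreeAut m} {n : ℕ}
    (h : ∀ u : List (Fin m), u.length = n → a.apply u = u) {v : List (Fin m)}
    (hv : v.length < n) : a.label v = 1 := by
  refine Equiv.ext fun x => ?_
  have hvx := apply_eq_self_of_length_le h (u := v ++ [x]) (by simp; omega)
  rw [apply_append, apply_eq_self_of_length_le h hv.le] at hvx
  simpa [apply_cons] using hvx

lemma inv_mul_apply_eq_self_iff [NeZero m] (a b : TreeAut m) (n : ℕ) :
    (∀ u : List (Fin m), u.length = n → (a⁻¹ * b).apply u = u) ↔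
      ∀ v : List (Fin m), v.length < n → a.label v = b.label v := by
  constructor
  · intro h v hv
    have hb : b = a * (a⁻¹ * b) := by group
    calc a.label v = a.label ((a⁻¹ * b).apply v) * (a⁻¹ * b).label v := by
          rw [apply_eq_self_of_length_le h hv.le, label_eq_one_of_length_lt h hv, mul_one]
      _ = b.label v := by rw [← mul_label, ← hb]
  · intro h u hu
    rw [mul_apply, apply_eq_apply_of_label_eq (fun v hv => (h v hv).symm) hu.le, ← mul_apply,
      inv_mul_cancel, one_apply]

end TreeAut

lemma mem_layerStab_iff_label [NeZero m] {G : Subgroup (TreeAut m)} {n : ℕ} {g : TreeAut m} :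
    g ∈ layerStab G n ↔ g ∈ G ∧ ∀ v : List (Fin m), v.length < n → g.label v = 1 := by
  have h := TreeAut.inv_mul_apply_eq_self_iff 1 g n
  simp only [inv_one, one_mul, TreeAut.one_label] at h
  exact and_congr_right fun _ => h.trans (by simp only [eq_comm])

lemma layerStab_zero (G : Subgroup (TreeAut m)) : layerStab G 0 = G :=
  le_antisymm (fun _ hg => hg.1) fun g hg =>
    ⟨hg, fun u hu => by rw [List.length_eq_zero_iff.mp hu]; rfl⟩

lemma layerStab_antitone [NeZero m] (G : Subgroup (TreeAut m)) : Antitone (layerStab G) :=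
  fun _ _ hnk _ hg =>
    mem_layerStab_iff_label.mpr ⟨(mem_layerStab_iff_label.mp hg).1,
      fun v hv => (mem_layerStab_iff_label.mp hg).2 v (hv.trans_le hnk)⟩

lemma layerStab_eq_inf_of_le {G H : Subgroup (TreeAut m)} (hGH : G ≤ H) (n : ℕ) :
    layerStab G n = layerStab H n ⊓ G := by
  ext g
  exact ⟨fun hg => ⟨⟨hGH hg.1, hg.2⟩, hg.1⟩, fun hg => ⟨hg.2, hg.1.2⟩⟩

lemma relIndex_layerStab_eq_prod [NeZero m] (G : Subgroup (TreeAut m)) (n : ℕ) :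
    (layerStab G n).relIndex G =
      ∏ k ∈ range n, (layerStab G (k + 1)).relIndex (layerStab G k) := by
  induction n with
  | zero => rw [layerStab_zero, Subgroup.relIndex_self, prod_range_zero]
  | succ n ih =>
    rw [prod_range_succ, ← ih, mul_comm, Subgroup.relIndex_mul_relIndex _ _ _
      (layerStab_antitone G n.le_succ)
      ((layerStab_antitone G n.zero_le).trans_eq (layerStab_zero G))]

lemma card_zpowers_finRotate (hm : 2 ≤ m) : Nat.card (Subgroup.zpowers (finRotate m)) = m := by
  rw [Nat.card_zpowers, (isCycle_finRotate_of_le hm).orderOf, support_finRotate_of_le hm,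
    card_univ, Fintype.card_fin]

lemma eq_one_of_mem_zpowers_finRotate (hm : 2 ≤ m) {p : Equiv.Perm (Fin m)}
    (hp : p ∈ Subgroup.zpowers (finRotate m)) {x : Fin m} (hx : p x = x) : p = 1 := by
  obtain ⟨k, rfl⟩ := (isOfFinOrder_of_finite (finRotate m)).mem_powers_iff_mem_zpowers.mpr hp
  have hmove : finRotate m x ≠ x := by
    rw [← Equiv.Perm.mem_support, support_finRotate_of_le hm]
    exact mem_univ x
  exact ((isCycle_finRotate_of_le hm).pow_eq_one_iff' hmove).mpr hx

def rootLabelHom (m : ℕ) : TreeAut m →* Equiv.Perm (Fin m) where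
  toFun g := g.label []
  map_one' := rfl
  map_mul' _ _ := rfl

lemma layerStab_one_eq_ker_inf [NeZero m] (G : Subgroup (TreeAut m)) :
    layerStab G 1 = (rootLabelHom m).ker ⊓ G := by
  ext g
  simp only [mem_layerStab_iff_label, Nat.lt_one_iff, List.length_eq_zero_iff, forall_eq,
    Subgroup.mem_inf, MonoidHom.mem_ker, and_comm]
  rfl

lemma relIndex_layerStab_one (hm : 2 ≤ m) {G : Subgroup (TreeAut m)} (hG : G ≤ Gamma m)
    (htrans : SphericallyTransitive G) : (layerStab G 1).relIndex G = m := by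
  have : NeZero m := ⟨by omega⟩
  have hmap : G.map (rootLabelHom m) = Subgroup.zpowers (finRotate m) := by
    refine le_antisymm (fun _ ⟨g, hg, hgp⟩ => hgp ▸ hG hg []) (Subgroup.zpowers_le.mpr ?_)
    obtain ⟨g, hg, hg01⟩ := htrans [0] [finRotate m 0] rfl
    have hfix : ((finRotate m)⁻¹ * g.label []) 0 = 0 := by
      simp only [TreeAut.apply_cons, List.cons.injEq] at hg01
      rw [Equiv.Perm.mul_apply, hg01.1, Equiv.Perm.inv_eq_iff_eq]
    have hσ := eq_one_of_mem_zpowers_finRotate hm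
      (mul_mem (inv_mem (Subgroup.mem_zpowers _)) (hG hg [])) hfix
    exact ⟨g, hg, (inv_mul_eq_one.mp hσ).symm⟩
  rw [layerStab_one_eq_ker_inf, Subgroup.inf_relIndex_right, Subgroup.relIndex_ker, hmap,
    card_zpowers_finRotate hm]

lemma _root_.Subgroup.index_eq_card_of_surjective {Q α : Type*} [Group Q] (H : Subgroup Q)
    (f : Q → α) (hf : Function.Surjective f) (hfib : ∀ a b, f a = f b ↔ a⁻¹ * b ∈ H) :
    H.index = Nat.card α := by
  rw [Subgroup.index_eq_card]
  exact Nat.card_congr <| (Quotient.congrRight fun a b =>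
    QuotientGroup.leftRel_apply.trans (hfib a b).symm).trans
      (Setoid.quotientKerEquivOfSurjective f hf)

lemma card_sigma_vector (m n : ℕ) :
    Nat.card (Σ k : Fin n, List.Vector (Fin m) k) = ∑ k ∈ range n, m ^ k := by
  simp only [Nat.card_eq_fintype_card, Fintype.card_sigma, card_vector, Fintype.card_fin,
    Fin.sum_univ_eq_sum_range (m ^ ·)]

/-- `Γ / St_Γ(n)` is parametrised by the labels at the vertices `⟨k, v⟩` of length `k < n`. -/
lemma relIndex_layerStab_Gamma (hm : 2 ≤ m) (n : ℕ) :
    (layerStab (Gamma m) n).relIndex (Gamma m) = m ^ ∑ k ∈ range n, m ^ k := by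
  have : NeZero m := ⟨by omega⟩
  let f : Gamma m → (Σ k : Fin n, List.Vector (Fin m) k) → Subgroup.zpowers (finRotate m) :=
    fun g w => ⟨(g : TreeAut m).label w.2.1, g.2 _⟩
  have hf : Function.Surjective f := by
    intro w
    refine ⟨⟨⟨fun u => if h : u.length < n then w ⟨⟨u.length, h⟩, ⟨u, rfl⟩⟩ else 1⟩,
      fun u => ?_⟩, ?_⟩
    · dsimp only
      split_ifs
      exacts [(w _).2, one_mem _]
    · funext w'
      obtain ⟨⟨k, hk⟩, u, hu⟩ := w'
      dsimp only at hu
      subst hu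
      simp [f, hk]
  have hfib : ∀ a b, f a = f b ↔ a⁻¹ * b ∈ (layerStab (Gamma m) n).subgroupOf (Gamma m) := by
    intro a b
    rw [Subgroup.mem_subgroupOf, Subgroup.coe_mul, Subgroup.coe_inv]
    refine (?_ : _ ↔ ∀ v : List (Fin m), v.length < n → _).trans
      ((TreeAut.inv_mul_apply_eq_self_iff _ _ n).symm.trans (and_iff_right (a⁻¹ * b).2).symm)
    simp only [f, funext_iff, Subtype.ext_iff]
    exact ⟨fun h v hv => h ⟨⟨_, hv⟩, ⟨v, rfl⟩⟩, fun h w => h w.2.1 (w.2.2.trans_lt w.1.2)⟩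
  rw [Subgroup.relIndex, Subgroup.index_eq_card_of_surjective _ f hf hfib, Nat.card_fun,
    card_zpowers_finRotate hm, card_sigma_vector]

section IndexBounds

variable {G : Subgroup (TreeAut m)}

lemma relIndex_layerStab_ne_zero (hm : 2 ≤ m) (hG : G ≤ Gamma m) (n : ℕ) :
    (layerStab G n).relIndex G ≠ 0 := by
  rw [layerStab_eq_inf_of_le hG, Subgroup.inf_relIndex_right]
  refine fun h => ?_
  have hΓ := Subgroup.relIndex_eq_zero_of_le_right hG h
  rw [relIndex_layerStab_Gamma hm] at hΓ
  exact pow_ne_zero _ (by omega) hΓ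

lemma relIndex_layerStab_le (hm : 2 ≤ m) (hG : G ≤ Gamma m) (n : ℕ) :
    (layerStab G n).relIndex G ≤ m ^ ∑ k ∈ range n, m ^ k := by
  rw [layerStab_eq_inf_of_le hG, Subgroup.inf_relIndex_right, ← relIndex_layerStab_Gamma hm]
  refine Subgroup.relIndex_le_of_le_right hG ?_
  rw [relIndex_layerStab_Gamma hm]
  exact pow_ne_zero _ (by omega)

lemma logb_relIndex_layerStab_nonneg (hm : 2 ≤ m) (hG : G ≤ Gamma m) (n : ℕ) :
    0 ≤ Real.logb m ((layerStab G n).relIndex G) :=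
  Real.logb_nonneg (by exact_mod_cast hm) <| by
    exact_mod_cast Nat.one_le_iff_ne_zero.mpr (relIndex_layerStab_ne_zero hm hG n)

lemma logb_relIndex_layerStab_le (hm : 2 ≤ m) (hG : G ≤ Gamma m) (n : ℕ) :
    Real.logb m ((layerStab G n).relIndex G) ≤ ∑ k ∈ range n, (m : ℝ) ^ k := by
  calc Real.logb m ((layerStab G n).relIndex G)
      ≤ Real.logb m ((m ^ ∑ k ∈ range n, m ^ k : ℕ) : ℝ) :=
        Real.logb_le_logb_of_le (by exact_mod_cast hm) (by
          exact_mod_cast Nat.pos_of_ne_zero (relIndex_layerStab_ne_zero hm hG n))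
          (by exact_mod_cast relIndex_layerStab_le hm hG n)
    _ = ∑ k ∈ range n, (m : ℝ) ^ k := by
        simp only [Nat.cast_pow, Nat.cast_sum, Real.logb_pow,
          Real.logb_self_eq_one (by exact_mod_cast hm : (1 : ℝ) < m), mul_one]

lemma logb_relIndex_layerStab_eq_sum (hm : 2 ≤ m) (hG : G ≤ Gamma m) (n : ℕ) :
    Real.logb m ((layerStab G n).relIndex G) =
      ∑ k ∈ range n, Real.logb m ((layerStab G (k + 1)).relIndex (layerStab G k)) := by
  have : NeZero m := ⟨by omega⟩
  have hprod := relIndex_layerStab_eq_prod G n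
  have hfactors := prod_ne_zero_iff.mp (hprod ▸ relIndex_layerStab_ne_zero hm hG n)
  rw [hprod, Nat.cast_prod, Real.logb_prod _ _ fun k hk => by exact_mod_cast hfactors k hk]

end IndexBounds

lemma hdim_eq_liminf (hm : 2 ≤ m) (G : Subgroup (TreeAut m)) :
    hdim m G = liminf (fun n => Real.logb m ((layerStab G n).relIndex G) /
      ∑ k ∈ range n, (m : ℝ) ^ k) atTop := by
  simp only [hdim, relIndex_layerStab_Gamma hm, Nat.cast_pow, Nat.cast_sum, Real.logb_pow,
    Real.logb_self_eq_one (by exact_mod_cast hm : (1 : ℝ) < m), mul_one]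

lemma sum_Icc_zpow_sub_mul_eq {m : ℝ} (hm : m ≠ 0) {l o : ℕ → ℝ} (hl : l 0 = 1)
    (ho : ∀ i, o (i + 1) = m * l i - l (i + 1)) (n : ℕ) :
    ∑ i ∈ Icc 1 n, (m ^ (-(i : ℤ)) - m ^ (-((n : ℤ) + 1))) * o i =
      1 - (1 + (m - 1) * ∑ k ∈ range (n + 1), l k) / m ^ (n + 1) := by
  have hweighted : ∀ n : ℕ, ∑ i ∈ Icc 1 n, m ^ (-(i : ℤ)) * o i = 1 - l n / m ^ n := by
    intro n
    induction n with
    | zero => simp [hl]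
    | succ n ih =>
      rw [sum_Icc_succ_top (by omega), ih, ho, zpow_neg, zpow_natCast]
      field_simp
      ring
  have hplain : ∀ n : ℕ,
      ∑ i ∈ Icc 1 n, o i = m * ∑ k ∈ range n, l k - ∑ k ∈ range (n + 1), l k + 1 := by
    intro n
    induction n with
    | zero => simp [hl]
    | succ n ih =>
      rw [sum_Icc_succ_top (by omega), ih, ho, sum_range_succ _ (n + 1), sum_range_succ _ n]
      ring
  have hneg : m ^ (-((n : ℤ) + 1)) = (m ^ (n + 1))⁻¹ := by
    rw [← zpow_natCast, ← zpow_neg, Nat.cast_add_one]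
  simp only [sub_mul, sum_sub_distrib, ← mul_sum, hweighted, hplain, hneg, sum_range_succ _ n]
  field_simp
  ring

lemma liminf_add_of_tendsto_zero {ι : Type*} {F : Filter ι} [F.NeBot] {e t : ι → ℝ}
    (he : Tendsto e F (𝓝 0)) (ht_ge : IsBoundedUnder (· ≥ ·) F t)
    (ht_le : IsBoundedUnder (· ≤ ·) F t) : liminf (e + t) F = liminf t F := by
  have hlow := le_liminf_add he.isBoundedUnder_ge he.isBoundedUnder_le ht_ge
    ht_le.isCoboundedUnder_ge
  have hup := liminf_add_le he.isBoundedUnder_ge he.isBoundedUnder_le ht_ge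
    ht_le.isCoboundedUnder_ge
  rw [he.liminf_eq] at hlow
  rw [he.limsup_eq] at hup
  linarith

lemma limsup_one_sub_div_pow_eq {m : ℝ} (hm : 1 < m) {a : ℕ → ℝ} (ha₀ : ∀ n, 0 ≤ a n)
    (ha : ∀ n, a n ≤ ∑ k ∈ range n, m ^ k) :
    limsup (fun n => 1 - (1 + (m - 1) * a (n + 1)) / m ^ (n + 1)) atTop =
      1 - liminf (fun n => a n / ∑ k ∈ range n, m ^ k) atTop := by
  set t : ℕ → ℝ := fun n => a n / ∑ k ∈ range n, m ^ k
  have ht₀ : ∀ n, 0 ≤ t n := fun n => div_nonneg (ha₀ n) ((ha₀ n).trans (ha n))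
  have ht₁ : ∀ n, t n ≤ 1 := fun n => div_le_one_of_le₀ (ha n) ((ha₀ n).trans (ha n))
  set e : ℕ → ℝ := fun n => (1 - t (n + 1)) / m ^ (n + 1)
  have hsplit :
      (fun n => (1 + (m - 1) * a (n + 1)) / m ^ (n + 1)) = e + fun n => t (n + 1) := by
    funext n
    have hc : 0 < ∑ k ∈ range (n + 1), m ^ k :=
      sum_pos (fun k _ => by positivity) nonempty_range_add_one
    have hgeom : (m - 1) * ∑ k ∈ range (n + 1), m ^ k = m ^ (n + 1) - 1 := by
      rw [mul_comm, geom_sum_mul]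
    simp only [e, t, Pi.add_apply]
    field_simp
    linear_combination a (n + 1) * hgeom
  have he : Tendsto e atTop (𝓝 0) := by
    have hpow : Tendsto (fun n : ℕ => (m ^ (n + 1))⁻¹) atTop (𝓝 0) :=
      tendsto_inv_atTop_zero.comp
        ((tendsto_pow_atTop_atTop_of_one_lt hm).comp (tendsto_add_atTop_nat 1))
    refine tendsto_of_tendsto_of_tendsto_of_le_of_le tendsto_const_nhds hpow
      (fun n => div_nonneg (by linarith [ht₁ (n + 1)]) (by positivity)) fun n => ?_
    simp only [e, div_eq_mul_inv]
    exact mul_le_of_le_one_left (by positivity) (by linarith [ht₀ (n + 1)])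
  have hshift_ge : IsBoundedUnder (· ≥ ·) atTop fun n => t (n + 1) :=
    isBoundedUnder_of ⟨0, fun n => ht₀ (n + 1)⟩
  have hshift_le : IsBoundedUnder (· ≤ ·) atTop fun n => t (n + 1) :=
    isBoundedUnder_of ⟨1, fun n => ht₁ (n + 1)⟩
  calc limsup (fun n => 1 - (1 + (m - 1) * a (n + 1)) / m ^ (n + 1)) atTop
      = limsup (fun n => 1 - (e + fun n => t (n + 1)) n) atTop := by rw [← hsplit]
    _ = 1 - liminf (e + fun n => t (n + 1)) atTop :=
        limsup_const_sub _ _ _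
          (isBoundedUnder_le_add he.isBoundedUnder_le hshift_le).isCoboundedUnder_ge
          (isBoundedUnder_ge_add he.isBoundedUnder_ge hshift_ge)
    _ = 1 - liminf t atTop := by
        rw [liminf_add_of_tendsto_zero he hshift_ge hshift_le, liminf_nat_add t 1]

lemma sum_Icc_obstruction_eq (hm : 2 ≤ m) {G : Subgroup (TreeAut m)} (hG : G ≤ Gamma m)
    (htrans : SphericallyTransitive G) (n : ℕ) :
    ∑ i ∈ Icc 1 n, ((m : ℝ) ^ (-(i : ℤ)) - (m : ℝ) ^ (-((n : ℤ) + 1))) * obstruction m G i =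
      1 - (1 + ((m : ℝ) - 1) * Real.logb m ((layerStab G (n + 1)).relIndex G)) /
        (m : ℝ) ^ (n + 1) := by
  rw [logb_relIndex_layerStab_eq_sum hm hG]
  refine sum_Icc_zpow_sub_mul_eq (by positivity) ?_ (fun i => rfl) n
  rw [layerStab_zero, relIndex_layerStab_one hm hG htrans,
    Real.logb_self_eq_one (by exact_mod_cast hm)]

/-- Let `G ≤ Γ` act spherically transitively on `T`. Then
`dim_H G = 1 - limsup_{n→∞} ∑_{i=1}^n (m^{-i} - m^{-(n+1)}) o_G(i)`. -/
theorem hdim_eq_one_sub_limsup_obstruction {m : ℕ} (hm : 2 ≤ m)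
    (G : Subgroup (TreeAut m)) (hG : G ≤ Gamma m)
    (htrans : SphericallyTransitive G) :
    hdim m G = 1 - Filter.limsup (fun n : ℕ =>
      ∑ i ∈ Finset.Icc 1 n,
        ((m : ℝ) ^ (-(i : ℤ)) - (m : ℝ) ^ (-((n : ℤ) + 1))) * obstruction m G i)
      Filter.atTop := by
  simp only [sum_Icc_obstruction_eq hm hG htrans]
  rw [limsup_one_sub_div_pow_eq (by exact_mod_cast hm) (logb_relIndex_layerStab_nonneg hm hG)
    (logb_relIndex_layerStab_le hm hG), hdim_eq_liminf hm, sub_sub_cancel]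

end Basilica
end
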